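/- For every i ∈ [k], the squared norm of the approximate centre satisfies (1/vol(S_i))·(1 − 1/Υ(k)) ≤ ‖p^(i)‖² ≤ 1/vol(S_i). -/

import Mathlib

/-!
Write `ḡ = ḡ_i` in the eigenbasis with coefficients `c_j = ⟨f_j, ḡ⟩`. Then `vol(S_i) ‖p^(i)‖²` is
the part `∑_{j ≤ k} c_j²` of `∑_j c_j² = ‖ḡ‖² = 1`, which gives the upper bound. For the lower
bound, the identity `D^{1/2} N D^{1/2} = D - A` shows both that `N` is positive semidefinite and
that the Rayleigh quotient `⟨ḡ, N ḡ⟩ = ∑_j λ_j c_j²` equals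
`w(S_i, V∖S_i) / vol(S_i) ≤ Φ(S_i) ≤ ρ(k)`.
As all `λ_j ≥ 0` and `λ_j ≥ λ_{k+1}` for `j > k`, the remaining mass `∑_{j > k} c_j²` is at most
`ρ(k) / λ_{k+1} = 1 / Υ(k)`.
-/

open Finset
open scoped RealInnerProductSpace

/-- The volume of a vertex set: the sum of the degrees of its vertices. -/
noncomputable def gVol {V : Type*} (deg : V → ℝ) (S : Finset V) : ℝ := ∑ u ∈ S, deg u

/-- The total edge weight between two vertex sets. -/
noncomputable def gCut {V : Type*} (w : V → V → ℝ) (A B : Finset V) : ℝ :=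
  ∑ u ∈ A, ∑ v ∈ B, w u v

/-- The conductance of a vertex set. -/
noncomputable def gCond {V : Type*} [Fintype V] [DecidableEq V]
    (w : V → V → ℝ) (deg : V → ℝ) (S : Finset V) : ℝ :=
  gCut w S Sᶜ / min (gVol deg S) (gVol deg Sᶜ)

/-- `S : Fin k → Finset V` is a partition of `V` into `k` non-empty sets. -/
def IsPartition {V : Type*} [Fintype V] {k : ℕ} (S : Fin k → Finset V) : Prop :=
  (∀ i, (S i).Nonempty) ∧ (∀ i j, i ≠ j → Disjoint (S i) (S j)) ∧ ∀ v, ∃ i, v ∈ S i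

/-- The vector `D^{1/2} χ_S`. -/
noncomputable def indVec {n : ℕ} (deg : Fin n → ℝ) (S : Finset (Fin n)) :
    EuclideanSpace ℝ (Fin n) :=
  WithLp.toLp 2 (fun v => if v ∈ S then Real.sqrt (deg v) else 0)

/-- The normalised indicator vector `D^{1/2} χ_S / ‖D^{1/2} χ_S‖` of a cluster `S`. -/
noncomputable def gbarVec {n : ℕ} (deg : Fin n → ℝ) (S : Finset (Fin n)) :
    EuclideanSpace ℝ (Fin n) :=
  ‖indVec deg S‖⁻¹ • indVec deg S

open Matrix

theorem sum_sum_mul_mul_sub_nonneg {V : Type*} [Fintype V] {w : V → V → ℝ}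
    (hsymm : ∀ u v, w u v = w v u) (hnonneg : ∀ u v, 0 ≤ w u v) (y : V → ℝ) :
    0 ≤ ∑ u, ∑ v, w u v * y u * (y u - y v) := by
  have hswap : ∑ u, ∑ v, w u v * y u * (y u - y v) = ∑ u, ∑ v, w u v * y v * (y v - y u) := by
    rw [sum_comm]
    simp only [hsymm]
  have hsq : 2 * ∑ u, ∑ v, w u v * y u * (y u - y v) = ∑ u, ∑ v, w u v * (y u - y v) ^ 2 := by
    rw [two_mul]
    nth_rw 2 [hswap]
    rw [← sum_add_distrib]
    refine sum_congr rfl fun u _ => ?_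
    rw [← sum_add_distrib]
    exact sum_congr rfl fun v _ => by ring
  have hsq_nonneg : 0 ≤ ∑ u, ∑ v, w u v * (y u - y v) ^ 2 :=
    sum_nonneg fun u _ => sum_nonneg fun v _ => mul_nonneg (hnonneg u v) (sq_nonneg _)
  linarith

theorem gVol_pos {V : Type*} {deg : V → ℝ} (hdegpos : ∀ u, 0 < deg u) {S : Finset V}
    (hS : S.Nonempty) : 0 < gVol deg S :=
  sum_pos (fun u _ => hdegpos u) hS

noncomputable def normLap {V : Type*} [DecidableEq V] (w : V → V → ℝ) (deg : V → ℝ) :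
    Matrix V V ℝ :=
  of fun u v => (if u = v then 1 else 0) - w u v / (√(deg u) * √(deg v))

section Laplacian

variable {V : Type*} [DecidableEq V] {w : V → V → ℝ} {deg : V → ℝ}

theorem normLap_isHermitian (hsymm : ∀ u v, w u v = w v u) : (normLap w deg).IsHermitian := by
  ext u v
  simp [normLap, hsymm u v, mul_comm, eq_comm]

theorem sqrt_mul_normLap_mul_sqrt (hdegpos : ∀ u, 0 < deg u) (u v : V) :
    √(deg u) * normLap w deg u v * √(deg v) = (if u = v then deg u else 0) - w u v := by
  have hu := Real.sqrt_pos.2 (hdegpos u)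
  have hv := Real.sqrt_pos.2 (hdegpos v)
  have hdiag : √(deg u) * (if u = v then 1 else 0) * √(deg v) = if u = v then deg u else 0 := by
    split_ifs with h
    · subst h
      simp [Real.mul_self_sqrt (hdegpos u).le]
    · simp
  have hoff : √(deg u) * (w u v / (√(deg u) * √(deg v))) * √(deg v) = w u v := by
    field_simp
  simp only [normLap, of_apply, mul_sub, sub_mul, hdiag, hoff]

variable [Fintype V]

theorem sqrt_mul_dotProduct_normLap_mulVec (hdeg : ∀ u, deg u = ∑ v, w u v)
    (hdegpos : ∀ u, 0 < deg u) (y : V → ℝ) :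
    (fun u => √(deg u) * y u) ⬝ᵥ normLap w deg *ᵥ (fun u => √(deg u) * y u)
      = ∑ u, ∑ v, w u v * y u * (y u - y v) := by
  calc _ = ∑ u, ∑ v, y u * (√(deg u) * normLap w deg u v * √(deg v)) * y v := by
        simp only [dotProduct, mulVec, Finset.mul_sum]
        exact sum_congr rfl fun u _ => sum_congr rfl fun v _ => by ring
    _ = ∑ u, ∑ v, y u * ((if u = v then deg u else 0) - w u v) * y v := by
        simp only [sqrt_mul_normLap_mul_sqrt hdegpos]
    _ = _ := by
        refine sum_congr rfl fun u _ => ?_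
        simp only [mul_sub, sub_mul, sum_sub_distrib, mul_ite, ite_mul, mul_zero, zero_mul,
          sum_ite_eq, mem_univ, if_true, hdeg u, Finset.mul_sum, Finset.sum_mul]
        congr 1 <;> exact sum_congr rfl fun v _ => by ring

theorem normLap_posSemidef (hsymm : ∀ u v, w u v = w v u) (hnonneg : ∀ u v, 0 ≤ w u v)
    (hdeg : ∀ u, deg u = ∑ v, w u v) (hdegpos : ∀ u, 0 < deg u) :
    (normLap w deg).PosSemidef := by
  refine .of_dotProduct_mulVec_nonneg (normLap_isHermitian hsymm) fun x => ?_
  have hx : x = fun u => √(deg u) * (x u / √(deg u)) := by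
    funext u
    field_simp [(Real.sqrt_pos.2 (hdegpos u)).ne']
  rw [star_trivial, hx, sqrt_mul_dotProduct_normLap_mulVec hdeg hdegpos]
  exact sum_sum_mul_mul_sub_nonneg hsymm hnonneg _

theorem sum_sum_mul_indicator_eq_gCut (S : Finset V) :
    ∑ u, ∑ v, w u v * (if u ∈ S then 1 else 0) *
        ((if u ∈ S then 1 else 0) - if v ∈ S then 1 else 0) = gCut w S Sᶜ := by
  simp only [gCut, mul_ite, mul_one, mul_zero, ite_mul, zero_mul, sum_ite_irrel, sum_const_zero,
    sum_ite_mem, univ_inter]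
  refine sum_congr rfl fun u hu => ?_
  simp only [hu, if_true, mul_sub, mul_ite, mul_one, mul_zero, sum_sub_distrib, sum_ite_mem,
    univ_inter]
  rw [← sum_compl_add_sum S]
  ring

theorem gCut_div_gVol_le_gCond (hnonneg : ∀ u v, 0 ≤ w u v) (hdegpos : ∀ u, 0 < deg u)
    (S : Finset V) : gCut w S Sᶜ / gVol deg S ≤ gCond w deg S := by
  have hcut : 0 ≤ gCut w S Sᶜ := sum_nonneg fun u _ => sum_nonneg fun v _ => hnonneg u v
  have hcond : 0 ≤ gCond w deg S :=
    div_nonneg hcut (le_min (sum_nonneg fun u _ => (hdegpos u).le)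
      (sum_nonneg fun u _ => (hdegpos u).le))
  rcases S.eq_empty_or_nonempty with rfl | hS
  · simpa [gCut] using hcond
  rcases Sᶜ.eq_empty_or_nonempty with hSc | hSc
  · simpa [gCut, hSc] using hcond
  exact div_le_div_of_nonneg_left hcut (lt_min (gVol_pos hdegpos hS) (gVol_pos hdegpos hSc))
    (min_le_left _ _)

end Laplacian

section Indicator

variable {n : ℕ} {w : Fin n → Fin n → ℝ} {deg : Fin n → ℝ}

theorem ofLp_indVec (deg : Fin n → ℝ) (S : Finset (Fin n)) :
    (indVec deg S).ofLp = fun u => √(deg u) * if u ∈ S then 1 else 0 := by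
  funext u
  simp [indVec]

theorem norm_indVec_sq (hdeg : ∀ u, 0 ≤ deg u) (S : Finset (Fin n)) :
    ‖indVec deg S‖ ^ 2 = gVol deg S := by
  simp [EuclideanSpace.norm_sq_eq, indVec, gVol, apply_ite, Real.sq_sqrt (hdeg _), sum_ite_mem]

theorem inner_gbarVec_normLap (hdeg : ∀ u, deg u = ∑ v, w u v) (hdegpos : ∀ u, 0 < deg u)
    (S : Finset (Fin n)) :
    ⟪gbarVec deg S, toEuclideanLin (normLap w deg) (gbarVec deg S)⟫ =
      gCut w S Sᶜ / gVol deg S := by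
  have hquad : ⟪indVec deg S, toEuclideanLin (normLap w deg) (indVec deg S)⟫ = gCut w S Sᶜ := by
    rw [EuclideanSpace.inner_eq_star_dotProduct, star_trivial, dotProduct_comm]
    simp only [toLpLin_apply]
    rw [ofLp_indVec, sqrt_mul_dotProduct_normLap_mulVec hdeg hdegpos,
      sum_sum_mul_indicator_eq_gCut]
  rw [gbarVec, real_inner_smul_left, map_smul, real_inner_smul_right, hquad, ← mul_assoc,
    ← mul_inv, ← sq, norm_indVec_sq (fun u => (hdegpos u).le), inv_mul_eq_div]

theorem inner_gbarVec_normLap_le_gCond (hnonneg : ∀ u v, 0 ≤ w u v)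
    (hdeg : ∀ u, deg u = ∑ v, w u v) (hdegpos : ∀ u, 0 < deg u) (S : Finset (Fin n)) :
    ⟪gbarVec deg S, toEuclideanLin (normLap w deg) (gbarVec deg S)⟫ ≤ gCond w deg S :=
  (inner_gbarVec_normLap hdeg hdegpos S).trans_le (gCut_div_gVol_le_gCond hnonneg hdegpos S)

theorem norm_gbarVec (hdegpos : ∀ u, 0 < deg u) {S : Finset (Fin n)} (hS : S.Nonempty) :
    ‖gbarVec deg S‖ = 1 := by
  have hind : ‖indVec deg S‖ ^ 2 ≠ 0 := by
    rw [norm_indVec_sq (fun u => (hdegpos u).le)]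
    exact (gVol_pos hdegpos hS).ne'
  rw [gbarVec, norm_smul, norm_inv, norm_norm,
    inv_mul_cancel₀ ((pow_ne_zero_iff two_ne_zero).1 hind)]

end Indicator

theorem Orthonormal.exists_orthonormalBasis_eq {𝕜 ι E : Type*} [RCLike 𝕜] [Fintype ι]
    [NormedAddCommGroup E] [InnerProductSpace 𝕜 E] [FiniteDimensional 𝕜 E] {v : ι → E}
    (hv : Orthonormal 𝕜 v) (hcard : Module.finrank 𝕜 E = Fintype.card ι) :
    ∃ b : OrthonormalBasis ι 𝕜 E, ⇑b = v := by
  obtain ⟨b, hb⟩ := Orthonormal.exists_orthonormalBasis_extension_of_card_eq hcard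
    (s := Set.univ) (hv.comp _ Subtype.val_injective)
  exact ⟨b, funext fun i => hb i trivial⟩

theorem LinearMap.IsPositive.nonneg_of_apply_eq_smul {E : Type*} [NormedAddCommGroup E]
    [InnerProductSpace ℝ E] {T : E →ₗ[ℝ] E} (hT : T.IsPositive) {v : E} (hv : v ≠ 0) {μ : ℝ}
    (h : T v = μ • v) : 0 ≤ μ := by
  have := hT.inner_nonneg_right v
  rw [h, real_inner_smul_right, real_inner_self_eq_norm_sq] at this
  exact nonneg_of_mul_nonneg_left this (by positivity)

theorem OrthonormalBasis.sum_mul_inner_sq_eq_inner_apply {ι E : Type*} [Fintype ι]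
    [NormedAddCommGroup E] [InnerProductSpace ℝ E] (b : OrthonormalBasis ι ℝ E)
    {T : E →ₗ[ℝ] E} (hT : T.IsSymmetric) {lam : ι → ℝ} (heig : ∀ j, T (b j) = lam j • b j)
    (x : E) : ∑ j, lam j * ⟪b j, x⟫ ^ 2 = ⟪x, T x⟫ := by
  rw [← b.sum_inner_mul_inner x (T x)]
  refine sum_congr rfl fun j _ => ?_
  rw [← hT, heig, real_inner_smul_left, real_inner_comm x]
  ring

theorem sum_Ici_le_sum_mul_div {ι : Type*} [Fintype ι] [Preorder ι] [LocallyFiniteOrderTop ι]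
    {lam a : ι → ℝ} (hmono : Monotone lam) (hlam : ∀ j, 0 ≤ lam j) (ha : ∀ j, 0 ≤ a j) {m : ι}
    (hm : 0 < lam m) : ∑ j ∈ Ici m, a j ≤ (∑ j, lam j * a j) / lam m := by
  rw [le_div_iff₀ hm, sum_mul]
  calc ∑ j ∈ Ici m, a j * lam m ≤ ∑ j ∈ Ici m, lam j * a j :=
        sum_le_sum fun j hj => by
          rw [mul_comm]
          exact mul_le_mul_of_nonneg_right (hmono (mem_Ici.1 hj)) (ha j)
    _ ≤ ∑ j, lam j * a j :=
        sum_le_sum_of_subset_of_nonneg (subset_univ _) fun j _ _ => mul_nonneg (hlam j) (ha j)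

theorem OrthonormalBasis.sum_Ici_inner_sq_le {ι E : Type*} [Fintype ι] [Preorder ι]
    [LocallyFiniteOrderTop ι] [NormedAddCommGroup E] [InnerProductSpace ℝ E]
    (b : OrthonormalBasis ι ℝ E) {T : E →ₗ[ℝ] E} (hT : T.IsPositive) {lam : ι → ℝ}
    (hmono : Monotone lam) (heig : ∀ j, T (b j) = lam j • b j) {m : ι} (hm : 0 < lam m) (x : E) :
    ∑ j ∈ Ici m, ⟪b j, x⟫ ^ 2 ≤ ⟪x, T x⟫ / lam m := by
  rw [← b.sum_mul_inner_sq_eq_inner_apply hT.isSymmetric heig]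
  exact sum_Ici_le_sum_mul_div hmono
    (fun j => hT.nonneg_of_apply_eq_smul (b.orthonormal.ne_zero j) (heig j))
    (fun j => sq_nonneg _) hm

theorem Fin.sum_castLE_add_sum_Ici {M : Type*} [AddCommMonoid M] {k n : ℕ} (h : k < n)
    (g : Fin n → M) :
    ∑ j : Fin k, g (Fin.castLE h.le j) + ∑ j ∈ Ici (⟨k, h⟩ : Fin n), g j = ∑ j, g j := by
  have himage : univ.map (Fin.castLEEmb h.le) = (Ici (⟨k, h⟩ : Fin n))ᶜ := by
    ext j
    simp only [mem_map, mem_univ, true_and, Fin.coe_castLEEmb, mem_compl, mem_Ici, Fin.le_def,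
      not_le]
    constructor
    · rintro ⟨a, rfl⟩
      exact a.isLt
    · exact fun hj => ⟨⟨j, hj⟩, rfl⟩
  rw [← sum_compl_add_sum (Ici (⟨k, h⟩ : Fin n)) g, ← himage, sum_map]
  rfl

theorem approx_centre_norm_general
    {n k : ℕ} (hkn : k < n)
    (w : Fin n → Fin n → ℝ)
    (hsymm : ∀ u v, w u v = w v u)
    (hnonneg : ∀ u v, 0 ≤ w u v)
    (deg : Fin n → ℝ) (hdeg : ∀ u, deg u = ∑ v, w u v)
    (hdegpos : ∀ u, 0 < deg u)
    -- the normalised Laplacian `N = I - D^{-1/2} A D^{-1/2}`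
    (N : Matrix (Fin n) (Fin n) ℝ)
    (hN : ∀ u v, N u v =
      (if u = v then (1 : ℝ) else 0) - w u v / (Real.sqrt (deg u) * Real.sqrt (deg v)))
    -- its eigenvalues `lam 0 ≤ … ≤ lam (n-1)` with orthonormal eigenvectors `f`
    (lam : Fin n → ℝ) (hlam : Monotone lam)
    (f : Fin n → EuclideanSpace ℝ (Fin n))
    (hf : Orthonormal ℝ f)
    (heig : ∀ i, N.mulVec (f i) = lam i • (f i))
    -- `S` is a partition attaining the `k`-way expansion `ρ(k)`
    (S : Fin k → Finset (Fin n)) (hS : IsPartition S)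
    (rho : ℝ)
    (hrho : rho = ⨆ i, gCond w deg (S i))
    (hlampos : 0 < lam ⟨k, hkn⟩)
    -- `Υ(k) = λ_{k+1} / ρ(k)`
    (Upsilon : ℝ) (hU : Upsilon = lam ⟨k, hkn⟩ / rho)
    -- the normalised indicator vectors of the clusters
    (gbar : Fin k → EuclideanSpace ℝ (Fin n))
    (hgbar : ∀ i, gbar i = gbarVec deg (S i))
    -- the approximate cluster centres `p^(i)(j) = ⟨f_j, ḡ_i⟩ / √vol(S_i)`
    (p : Fin k → EuclideanSpace ℝ (Fin k))
    (hp : ∀ i j, p i j = ⟪f (Fin.castLE hkn.le j), gbar i⟫ / Real.sqrt (gVol deg (S i))) :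
    ∀ i : Fin k,
      (1 / gVol deg (S i)) * (1 - 1 / Upsilon) ≤ ‖p i‖ ^ 2 ∧
        ‖p i‖ ^ 2 ≤ 1 / gVol deg (S i) := by
  intro i
  obtain rfl : N = normLap w deg := Matrix.ext hN
  obtain ⟨b, rfl⟩ := hf.exists_orthonormalBasis_eq (by simp)
  simp only [hgbar] at hp
  set T := toEuclideanLin (normLap w deg)
  set g := gbarVec deg (S i)
  have hTpos : T.IsPositive :=
    isPositive_toEuclideanLin_iff.2 (normLap_posSemidef hsymm hnonneg hdeg hdegpos)
  have heigT : ∀ j, T (b j) = lam j • b j := fun j => by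
    ext u
    simp [T, heig]
  have hrayleigh : ⟪g, T g⟫ ≤ rho :=
    (inner_gbarVec_normLap_le_gCond hnonneg hdeg hdegpos (S i)).trans
      (hrho ▸ le_ciSup (f := fun j => gCond w deg (S j)) (Finite.bddAbove_range _) i)
  have htail : ∑ j ∈ Ici ⟨k, hkn⟩, ⟪b j, g⟫ ^ 2 ≤ rho / lam ⟨k, hkn⟩ :=
    (b.sum_Ici_inner_sq_le hTpos hlam heigT hlampos g).trans
      (div_le_div_of_nonneg_right hrayleigh hlampos.le)
  have htail0 : 0 ≤ ∑ j ∈ Ici ⟨k, hkn⟩, ⟪b j, g⟫ ^ 2 := sum_nonneg fun j _ => sq_nonneg _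
  have hsplit := Fin.sum_castLE_add_sum_Ici hkn (fun j => ⟪b j, g⟫ ^ 2)
  rw [b.sum_sq_inner_right, norm_gbarVec hdegpos (hS.1 i), one_pow] at hsplit
  have hvol := gVol_pos hdegpos (hS.1 i)
  have hnorm :
      ‖p i‖ ^ 2 = (∑ j : Fin k, ⟪b (Fin.castLE hkn.le j), g⟫ ^ 2) / gVol deg (S i) := by
    simp [EuclideanSpace.norm_sq_eq, hp, div_pow, Real.sq_sqrt hvol.le, sum_div, g]
  rw [hnorm, hU, one_div_div, one_div_mul_eq_div]
  constructor <;> gcongr <;> linarith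

/-- Bounds on the norm of the approximate cluster centres (Lemma 4.5). -/
theorem approx_centre_norm
    {n k : ℕ} (hk : 0 < k) (hkn : k < n)
    (w : Fin n → Fin n → ℝ)
    (hsymm : ∀ u v, w u v = w v u)
    (hnonneg : ∀ u v, 0 ≤ w u v)
    (deg : Fin n → ℝ) (hdeg : ∀ u, deg u = ∑ v, w u v)
    (hdegpos : ∀ u, 0 < deg u)
    -- the normalised Laplacian `N = I - D^{-1/2} A D^{-1/2}`
    (N : Matrix (Fin n) (Fin n) ℝ)
    (hN : ∀ u v, N u v =
      (if u = v then (1 : ℝ) else 0) - w u v / (Real.sqrt (deg u) * Real.sqrt (deg v)))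
    -- its eigenvalues `lam 0 ≤ … ≤ lam (n-1)` with orthonormal eigenvectors `f`
    (lam : Fin n → ℝ) (hlam : Monotone lam)
    (f : Fin n → EuclideanSpace ℝ (Fin n))
    (hf : Orthonormal ℝ f)
    (heig : ∀ i, N.mulVec (f i) = lam i • (f i))
    -- `S` is a partition attaining the `k`-way expansion `ρ(k)`
    (S : Fin k → Finset (Fin n)) (hS : IsPartition S)
    (rho : ℝ)
    (hrho : rho = ⨆ i, gCond w deg (S i))
    (hopt : ∀ T : Fin k → Finset (Fin n), IsPartition T → rho ≤ ⨆ i, gCond w deg (T i))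
    (hrhopos : 0 < rho)
    (hlampos : 0 < lam ⟨k, hkn⟩)
    -- `Υ(k) = λ_{k+1} / ρ(k)`
    (Upsilon : ℝ) (hU : Upsilon = lam ⟨k, hkn⟩ / rho)
    -- the normalised indicator vectors of the clusters
    (gbar : Fin k → EuclideanSpace ℝ (Fin n))
    (hgbar : ∀ i, gbar i = gbarVec deg (S i))
    -- the approximate cluster centres `p^(i)(j) = ⟨f_j, ḡ_i⟩ / √vol(S_i)`
    (p : Fin k → EuclideanSpace ℝ (Fin k))
    (hp : ∀ i j, p i j = ⟪f (Fin.castLE hkn.le j), gbar i⟫ / Real.sqrt (gVol deg (S i))) :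
    ∀ i : Fin k,
      (1 / gVol deg (S i)) * (1 - 1 / Upsilon) ≤ ‖p i‖ ^ 2 ∧
        ‖p i‖ ^ 2 ≤ 1 / gVol deg (S i) :=
  approx_centre_norm_general hkn w hsymm hnonneg deg hdeg hdegpos N hN lam hlam f hf heig S hS rho
    hrho hlampos Upsilon hU gbar hgbar p hp
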